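/- arXiv:1812.06250 — 5 statements merged into one kernel-verified Lean document; each statement's English description precedes it below -/
import Mathlib

section
/- For u ≥ 0 and R ≥ 0, the supremum of ρ·u + (1/2)ln(1-ρ²) over |ρ| ≤ √(1-e^{-2R}) equals u·√(1-e^{-2R}) - R when R ≤ (1/2)ln((1+√(1+4u²))/2), and equals 2u²/(1+√(1+4u²)) - (1/2)ln((1+√(1+4u²))/2) when R ≥ (1/2)ln((1+√(1+4u²))/2). -/
/-!
The objective `ρ ↦ ρu + ½ log(1 - ρ²)` is concave, so it lies below its tangent lines; writing
this with `log x ≤ x - 1` at `x = (1 - ρ²)/(1 - a²)` gives an explicit bound on the increment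
from `a` to `ρ`. The unconstrained maximizer `p = 2u/(1 + √(1 + 4u²))` solves `p = u(1 - p²)`,
and the constraint radius `√(1 - e^{-2R})` is monotone in `R` and equals `p` exactly at the
threshold `R = ½ log((1 + √(1 + 4u²))/2)`. Below the threshold the objective is increasing up to
the radius, which is therefore the maximizer; above it `p` is admissible and wins.
-/

open Real

noncomputable section

def corrObjective (u ρ : ℝ) : ℝ := ρ * u + (1/2) * log (1 - ρ^2)

def optCorr (u : ℝ) : ℝ := 2 * u / (1 + √(1 + 4 * u^2))

def corrRadius (R : ℝ) : ℝ := √(1 - exp (-2 * R))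

theorem corrObjective_le_tangent {u a ρ : ℝ} (ha : a^2 < 1) (hρ : ρ^2 < 1) :
    corrObjective u ρ ≤ corrObjective u a + (ρ - a) * (u - (ρ + a) / (2 * (1 - a^2))) := by
  have ha' : 0 < 1 - a^2 := by linarith
  have hρ' : 0 < 1 - ρ^2 := by linarith
  have hlog : log (1 - ρ^2) - log (1 - a^2) ≤ (1 - ρ^2) / (1 - a^2) - 1 := by
    rw [← log_div hρ'.ne' ha'.ne']
    exact log_le_sub_one_of_pos (by positivity)
  have hquot : (1 - ρ^2) / (1 - a^2) - 1 = -((ρ - a) * (ρ + a) / (1 - a^2)) := by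
    field_simp; ring
  have hsplit : (ρ - a) * ((ρ + a) / (2 * (1 - a^2))) = (ρ - a) * (ρ + a) / (1 - a^2) / 2 := by
    field_simp
  unfold corrObjective
  rw [mul_sub, hsplit]
  linarith

theorem sSup_corrObjective_eq {u c a : ℝ} (ha : |a| ≤ c)
    (hmax : ∀ ρ, |ρ| ≤ c → corrObjective u ρ ≤ corrObjective u a) :
    sSup {v | ∃ ρ, |ρ| ≤ c ∧ v = corrObjective u ρ} = corrObjective u a :=
  IsGreatest.csSup_eq ⟨⟨a, ha, rfl⟩, by rintro v ⟨ρ, hρ, rfl⟩; exact hmax ρ hρ⟩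

theorem one_sub_optCorr_sq (u : ℝ) : 1 - optCorr u ^ 2 = 2 / (1 + √(1 + 4 * u^2)) := by
  have hs : √(1 + 4 * u^2) ^ 2 = 1 + 4 * u^2 := sq_sqrt (by positivity)
  have hpos : 0 < 1 + √(1 + 4 * u^2) := by positivity
  unfold optCorr
  generalize √(1 + 4 * u^2) = s at hs hpos ⊢
  field_simp
  linear_combination hs

theorem optCorr_sq_lt_one (u : ℝ) : optCorr u ^ 2 < 1 := by
  have := one_sub_optCorr_sq u
  have : 0 < 2 / (1 + √(1 + 4 * u^2)) := by positivity
  linarith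

theorem optCorr_eq_mul (u : ℝ) : optCorr u = u * (1 - optCorr u ^ 2) := by
  rw [one_sub_optCorr_sq, optCorr]
  ring

theorem optCorr_nonneg {u : ℝ} (hu : 0 ≤ u) : 0 ≤ optCorr u := by
  unfold optCorr; positivity

theorem corrObjective_optCorr (u : ℝ) :
    corrObjective u (optCorr u) = 2 * u^2 / (1 + √(1 + 4 * u^2))
      - (1/2) * log ((1 + √(1 + 4 * u^2)) / 2) := by
  rw [corrObjective, one_sub_optCorr_sq, ← inv_div 2 (1 + √(1 + 4 * u^2)), log_inv, optCorr]
  ring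

theorem corrObjective_le_optCorr (u : ℝ) {ρ : ℝ} (hρ : ρ^2 < 1) :
    corrObjective u ρ ≤ corrObjective u (optCorr u) := by
  have hp := optCorr_sq_lt_one u
  have hp' : 0 < 1 - optCorr u ^ 2 := by linarith
  -- since `u(1 - p²) = p`
  have hslope : u - (ρ + optCorr u) / (2 * (1 - optCorr u ^ 2))
      = (optCorr u - ρ) / (2 * (1 - optCorr u ^ 2)) := by
    field_simp
    linarith [optCorr_eq_mul u]
  have hneg : (ρ - optCorr u) * ((optCorr u - ρ) / (2 * (1 - optCorr u ^ 2))) ≤ 0 := by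
    rw [← mul_div_assoc]
    exact div_nonpos_of_nonpos_of_nonneg (by nlinarith [sq_nonneg (ρ - optCorr u)]) (by positivity)
  have htangent := corrObjective_le_tangent (u := u) hp hρ
  rw [hslope] at htangent
  linarith

theorem corrObjective_le_of_le_optCorr {u a ρ : ℝ} (hu : 0 ≤ u) (ha : 0 ≤ a)
    (hap : a ≤ optCorr u) (hρa : ρ ≤ a) (hρ : ρ^2 < 1) :
    corrObjective u ρ ≤ corrObjective u a := by
  have hp := optCorr_sq_lt_one u
  have hsq : a^2 ≤ optCorr u ^ 2 := pow_le_pow_left₀ ha hap 2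
  have ha1 : 0 < 1 - a^2 := by linarith
  have hslope : 0 ≤ u - (ρ + a) / (2 * (1 - a^2)) := by
    rw [sub_nonneg, div_le_iff₀ (by positivity)]
    nlinarith [optCorr_eq_mul u, mul_le_mul_of_nonneg_left hsq hu]
  nlinarith [corrObjective_le_tangent (u := u) (by linarith : a^2 < 1) hρ,
    mul_nonpos_of_nonpos_of_nonneg (sub_nonpos.2 hρa) hslope]

theorem corrRadius_monotone : Monotone corrRadius := fun _ _ h =>
  sqrt_le_sqrt (sub_le_sub_left (exp_le_exp.2 (by linarith)) 1)

theorem corrRadius_lt_one (R : ℝ) : corrRadius R < 1 := by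
  rw [corrRadius, sqrt_lt' one_pos]
  linarith [exp_pos (-2 * R)]

theorem corrRadius_sq {R : ℝ} (hR : 0 ≤ R) : corrRadius R ^ 2 = 1 - exp (-2 * R) :=
  sq_sqrt (by linarith [exp_le_one_iff.2 (by linarith : -2 * R ≤ 0)])

theorem corrRadius_threshold {u : ℝ} (hu : 0 ≤ u) :
    corrRadius ((1/2) * log ((1 + √(1 + 4 * u^2)) / 2)) = optCorr u := by
  have hpos : 0 < (1 + √(1 + 4 * u^2)) / 2 := by positivity
  have hexp : exp (-2 * ((1/2) * log ((1 + √(1 + 4 * u^2)) / 2)))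
      = 2 / (1 + √(1 + 4 * u^2)) := by
    rw [show -2 * ((1/2) * log ((1 + √(1 + 4 * u^2)) / 2))
      = -log ((1 + √(1 + 4 * u^2)) / 2) by ring, exp_neg, exp_log hpos, inv_div]
  rw [corrRadius, hexp, ← one_sub_optCorr_sq, sub_sub_cancel]
  exact sqrt_sq (optCorr_nonneg hu)

theorem corrObjective_corrRadius (u : ℝ) {R : ℝ} (hR : 0 ≤ R) :
    corrObjective u (corrRadius R) = u * corrRadius R - R := by
  rw [corrObjective, corrRadius_sq hR, sub_sub_cancel, log_exp]
  ring

/-- the constrained supremum w(u,R) of ρ·u + (1/2)ln(1-ρ²) over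
|ρ| ≤ √(1-e^{-2R}) equals the stated two-piece formula. -/
theorem stmt_0 (u R : ℝ) (hu : 0 ≤ u) (hR : 0 ≤ R) :
    (R ≤ (1/2) * Real.log ((1 + Real.sqrt (1 + 4*u^2))/2) →
      sSup {v : ℝ | ∃ ρ : ℝ, |ρ| ≤ Real.sqrt (1 - Real.exp (-2*R)) ∧
          v = ρ*u + (1/2) * Real.log (1 - ρ^2)}
        = u * Real.sqrt (1 - Real.exp (-2*R)) - R) ∧
    ((1/2) * Real.log ((1 + Real.sqrt (1 + 4*u^2))/2) ≤ R →
      sSup {v : ℝ | ∃ ρ : ℝ, |ρ| ≤ Real.sqrt (1 - Real.exp (-2*R)) ∧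
          v = ρ*u + (1/2) * Real.log (1 - ρ^2)}
        = 2*u^2 / (1 + Real.sqrt (1 + 4*u^2))
            - (1/2) * Real.log ((1 + Real.sqrt (1 + 4*u^2))/2)) := by
  have hadm : ∀ ρ, |ρ| ≤ corrRadius R → ρ^2 < 1 := fun ρ hρ =>
    (sq_lt_one_iff_abs_lt_one ρ).2 (hρ.trans_lt (corrRadius_lt_one R))
  have hr0 : 0 ≤ corrRadius R := sqrt_nonneg _
  refine ⟨fun hRL => ?_, fun hLR => ?_⟩
  · have hr : corrRadius R ≤ optCorr u := corrRadius_threshold hu ▸ corrRadius_monotone hRL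
    refine (sSup_corrObjective_eq (abs_of_nonneg hr0).le fun ρ hρ => ?_).trans
      (corrObjective_corrRadius u hR)
    exact corrObjective_le_of_le_optCorr hu hr0 hr (le_abs_self ρ |>.trans hρ) (hadm ρ hρ)
  · have hp : optCorr u ≤ corrRadius R := corrRadius_threshold hu ▸ corrRadius_monotone hLR
    refine (sSup_corrObjective_eq ((abs_of_nonneg (optCorr_nonneg hu)).trans_le hp)
      fun ρ hρ => corrObjective_le_optCorr u (hadm ρ hρ)).trans (corrObjective_optCorr u)
end
end

section
/- For P > 0, σ² > 0, β ≥ 0, and ρ' ∈ [-1,1], the quantity Γ_L(ρ') := (1/2)ln(2πσ²) + inf over (a,b,σ_V²) ∈ ℝ²×(0,∞) of [ (1/(2σ²))(((a-1)² + 2ρ'(a-1)b + b²)P + σ_V²) - (1/2)ln(2πe σ_V²) + (βP/σ²)·max(0, a + ρ'b - ρ'a - b) ] equals (P/σ²)·β̂(1-β̂)·(1-ρ'), where β̂ = min(β, 1/2). -/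
/-!
With `s = a - 1 - b`, the quadratic form is at least `(1 - ρ') s² / 2` (its other part is
`(1 + ρ') (a - 1 + b)² / 2 ≥ 0`) and the hinge term equals `(1 - ρ') [s + 1]_+`, so the `(a, b)`-part
of the objective is bounded below by `(P/σ²) (1 - ρ') (s²/4 + β [s + 1]_+)`, whose minimum over `s`
is `β̂ (1 - β̂)`, attained at `s = -2β̂`. The `σ_V²`-part is minimised at `σ_V² = σ²` by
`ln x ≤ x - 1`. Both bounds are attained simultaneously at `(a, b, σ_V²) = (1 - β̂, β̂, σ²)`.
-/

open Real

section QuadraticHinge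

lemma min_half_mul_one_sub_le (β s : ℝ) :
    min β (1/2) * (1 - min β (1/2)) ≤ s ^ 2 / 4 + β * max 0 (s + 1) := by
  set m := min β (1/2)
  have hmβ : m ≤ β := min_le_left _ _
  have hm : m ≤ 1/2 := min_le_right _ _
  rcases le_total (s + 1) 0 with h | h
  · rw [max_eq_left h]
    nlinarith [sq_nonneg (1 - 2 * m), mul_nonneg (neg_nonneg.2 h) (by linarith : (0:ℝ) ≤ 1 - s)]
  · rw [max_eq_right h]
    nlinarith [sq_nonneg (s / 2 + m), mul_le_mul_of_nonneg_right hmβ h]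

lemma mul_one_sub_two_min_half (β : ℝ) :
    β * (1 - 2 * min β (1/2)) = min β (1/2) * (1 - 2 * min β (1/2)) := by
  rcases le_total β (1/2) with h | h
  · rw [min_eq_left h]
  · rw [min_eq_right h]; ring

variable {r : ℝ}

lemma one_sub_mul_sq_sub_le (hr : -1 ≤ r) (x y : ℝ) :
    (1 - r) * (x - y) ^ 2 / 2 ≤ x ^ 2 + 2 * r * x * y + y ^ 2 := by
  nlinarith [mul_nonneg (neg_le_iff_add_nonneg.1 hr) (sq_nonneg (x + y))]

noncomputable def quadraticHinge (β r a b : ℝ) : ℝ :=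
  ((a - 1) ^ 2 + 2 * r * (a - 1) * b + b ^ 2) / 2 + β * max 0 (a + r * b - r * a - b)

lemma le_quadraticHinge (hr : r ∈ Set.Icc (-1 : ℝ) 1) (β a b : ℝ) :
    (1 - r) * (min β (1/2) * (1 - min β (1/2))) ≤ quadraticHinge β r a b := by
  have hr' : 0 ≤ 1 - r := sub_nonneg.2 hr.2
  have hinge : max 0 (a + r * b - r * a - b) = (1 - r) * max 0 (a - 1 - b + 1) := by
    rw [mul_max_of_nonneg _ _ hr', mul_zero]; congr 1; ring
  have hquad := one_sub_mul_sq_sub_le hr.1 (a - 1) b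
  have hs := mul_le_mul_of_nonneg_left (min_half_mul_one_sub_le β (a - 1 - b)) hr'
  rw [quadraticHinge, hinge]
  linarith

lemma quadraticHinge_one_sub_min_half {β : ℝ} (hr : r ≤ 1) :
    quadraticHinge β r (1 - min β (1/2)) (min β (1/2))
      = (1 - r) * (min β (1/2) * (1 - min β (1/2))) := by
  set m := min β (1/2)
  have hm2 : 0 ≤ 1 - 2 * m := by linarith [min_le_right β (1/2)]
  have hinge : max 0 (1 - m + r * m - r * (1 - m) - m) = (1 - r) * (1 - 2 * m) := by
    rw [show 1 - m + r * m - r * (1 - m) - m = (1 - r) * (1 - 2 * m) by ring]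
    exact max_eq_right (mul_nonneg (sub_nonneg.2 hr) hm2)
  rw [quadraticHinge, hinge]
  linear_combination (1 - r) * mul_one_sub_two_min_half β

end QuadraticHinge

section GaussianEntropy

variable {c s : ℝ}

lemma neg_half_log_le (hc : 0 < c) (hs : 0 < s) {x : ℝ} (hx : 0 < x) :
    -(1/2) * log (c * s) ≤ x / (2 * s) - (1/2) * log (c * exp 1 * x) := by
  have hsplit : log (c * exp 1 * x) = log (c * s) + 1 + log (x / s) := by
    rw [show c * exp 1 * x = c * s * exp 1 * (x / s) by field_simp,
      log_mul (by positivity) (by positivity), log_mul (by positivity) (exp_ne_zero 1), log_exp]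
  have hlog := log_le_sub_one_of_pos (div_pos hx hs)
  rw [hsplit, show x / (2 * s) = x / s / 2 by ring]
  linarith

lemma self_div_sub_half_log (hc : 0 < c) (hs : 0 < s) :
    s / (2 * s) - (1/2) * log (c * exp 1 * s) = -(1/2) * log (c * s) := by
  rw [show c * exp 1 * s = c * s * exp 1 by ring, log_mul (by positivity) (exp_ne_zero 1), log_exp]
  field_simp
  ring

end GaussianEntropy

theorem stmt_4_general (P σ2 β r : ℝ) (hP : 0 < P) (hσ : 0 < σ2)
    (hr : r ∈ Set.Icc (-1 : ℝ) 1) :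
    (1/2) * Real.log (2 * Real.pi * σ2)
      + sInf {v : ℝ | ∃ a b sV : ℝ, 0 < sV ∧
          v = (1/(2*σ2)) * (((a-1)^2 + 2*r*(a-1)*b + b^2) * P + sV)
              - (1/2) * Real.log (2 * Real.pi * Real.exp 1 * sV)
              + (β*P/σ2) * max 0 (a + r*b - r*a - b)}
      = (P/σ2) * (min β (1/2)) * (1 - min β (1/2)) * (1 - r) := by
  set m := min β (1/2)
  have hπ : 0 < 2 * π := by positivity
  have hsplit : ∀ a b sV : ℝ,
      (1/(2*σ2)) * (((a-1)^2 + 2*r*(a-1)*b + b^2) * P + sV)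
        - (1/2) * log (2 * π * exp 1 * sV) + (β*P/σ2) * max 0 (a + r*b - r*a - b)
      = P / σ2 * quadraticHinge β r a b + (sV / (2 * σ2) - (1/2) * log (2 * π * exp 1 * sV)) := by
    intro a b sV; rw [quadraticHinge]; ring
  rw [IsLeast.csInf_eq (a := P / σ2 * ((1 - r) * (m * (1 - m))) - (1/2) * log (2 * π * σ2))]
  · ring
  refine ⟨⟨1 - m, m, σ2, hσ, ?_⟩, ?_⟩
  · rw [hsplit, quadraticHinge_one_sub_min_half hr.2, self_div_sub_half_log hπ hσ]; ring
  · rintro v ⟨a, b, sV, hsV, rfl⟩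
    rw [hsplit]
    have hpen := mul_le_mul_of_nonneg_left (le_quadraticHinge hr β a b) (div_pos hP hσ).le
    linarith [neg_half_log_le hπ hσ hsV]

/-- Γ_L(ρ') equals (P/σ²)·β̂(1-β̂)·(1-ρ') with β̂ = min(β,1/2). -/
theorem stmt_4 (P σ2 β r : ℝ) (hP : 0 < P) (hσ : 0 < σ2) (hβ : 0 ≤ β)
    (hr : r ∈ Set.Icc (-1 : ℝ) 1) :
    (1/2) * Real.log (2 * Real.pi * σ2)
      + sInf {v : ℝ | ∃ a b sV : ℝ, 0 < sV ∧
          v = (1/(2*σ2)) * (((a-1)^2 + 2*r*(a-1)*b + b^2) * P + sV)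
              - (1/2) * Real.log (2 * Real.pi * Real.exp 1 * sV)
              + (β*P/σ2) * max 0 (a + r*b - r*a - b)}
      = (P/σ2) * (min β (1/2)) * (1 - min β (1/2)) * (1 - r) :=
  stmt_4_general P σ2 β r hP hσ hr
end

section
/- For any ρ' ∈ [-1,1] and any λ ∈ [0, 1/2], the infimum over (a,b) ∈ ℝ² of (P/(2σ²))·[(a-1)² + 2ρ'(a-1)b + b²] + (λP/σ²)·(1-ρ')(a-b) equals (P/σ²)·λ(1-λ)·(1-ρ'). -/
/-! Up to the positive factor `P/(2σ²)` the expression is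
`(a-1)² + 2ρ'(a-1)b + b² + 2λ(1-ρ')(a-b)`, and completing the square gives
`2λ(1-λ)(1-ρ') + (a-1+λ+ρ'(b-λ))² + (1-ρ'²)(b-λ)²`. For `|ρ'| ≤ 1` both squares are
nonnegative, and both vanish at `(a,b) = (1-λ, λ)`. -/

open Set

/-- The expression of the theorem divided by `P/(2σ²)`. -/
def shiftedQuadratic (r lam a b : ℝ) : ℝ :=
  (a - 1)^2 + 2*r*(a - 1)*b + b^2 + 2*lam*(1 - r)*(a - b)

lemma shiftedQuadratic_eq (r lam a b : ℝ) :
    shiftedQuadratic r lam a b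
      = 2*lam*(1 - lam)*(1 - r) + (a - 1 + lam + r*(b - lam))^2 + (1 - r^2)*(b - lam)^2 := by
  unfold shiftedQuadratic
  ring

lemma shiftedQuadratic_at_minimizer (r lam : ℝ) :
    shiftedQuadratic r lam (1 - lam) lam = 2*lam*(1 - lam)*(1 - r) := by
  rw [shiftedQuadratic_eq]
  ring

lemma le_shiftedQuadratic {r : ℝ} (hr : r ∈ Icc (-1 : ℝ) 1) (lam a b : ℝ) :
    2*lam*(1 - lam)*(1 - r) ≤ shiftedQuadratic r lam a b := by
  have h1r : 0 ≤ 1 - r^2 := by nlinarith [hr.1, hr.2]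
  rw [shiftedQuadratic_eq]
  nlinarith [sq_nonneg (a - 1 + lam + r*(b - lam)), mul_nonneg h1r (sq_nonneg (b - lam))]

theorem stmt_5_general (P σ2 r lam : ℝ) (hP : 0 < P) (hσ : 0 < σ2)
    (hr : r ∈ Set.Icc (-1 : ℝ) 1) :
    sInf {v : ℝ | ∃ a b : ℝ,
        v = (P/(2*σ2)) * ((a-1)^2 + 2*r*(a-1)*b + b^2)
            + (lam*P/σ2) * (1 - r) * (a - b)}
      = (P/σ2) * lam * (1 - lam) * (1 - r) := by
  have hscale : ∀ a b : ℝ, (P/(2*σ2)) * ((a-1)^2 + 2*r*(a-1)*b + b^2)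
      + (lam*P/σ2) * (1 - r) * (a - b) = (P/(2*σ2)) * shiftedQuadratic r lam a b := by
    intro a b
    unfold shiftedQuadratic
    field_simp
  have hmin : (P/σ2) * lam * (1 - lam) * (1 - r) = (P/(2*σ2)) * (2*lam*(1 - lam)*(1 - r)) := by
    field_simp
  refine IsLeast.csInf_eq ⟨⟨1 - lam, lam, ?_⟩, ?_⟩
  · rw [hscale, shiftedQuadratic_at_minimizer, hmin]
  · rintro v ⟨a, b, rfl⟩
    rw [hscale, hmin]
    exact mul_le_mul_of_nonneg_left (le_shiftedQuadratic hr lam a b) (by positivity)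

/-- the infimum over (a,b) of the quadratic-plus-linear expression
equals (P/σ²)·λ(1-λ)·(1-ρ'). -/
theorem stmt_5 (P σ2 r lam : ℝ) (hP : 0 < P) (hσ : 0 < σ2)
    (hr : r ∈ Set.Icc (-1 : ℝ) 1) (hlam : lam ∈ Set.Icc (0 : ℝ) (1/2)) :
    sInf {v : ℝ | ∃ a b : ℝ,
        v = (P/(2*σ2)) * ((a-1)^2 + 2*r*(a-1)*b + b^2)
            + (lam*P/σ2) * (1 - r) * (a - b)}
      = (P/σ2) * lam * (1 - lam) * (1 - r) :=
  stmt_5_general P σ2 r lam hP hσ hr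
end

section
/- The lower bound on the typical-random-code exponent for the AWGN channel, E⁻(R) := inf over |ρ| ≤ √(1-e^{-4R}) of [(snr/4)(1-ρ) - (1/2)ln(1-ρ²) - R], equals (snr/4)(1-√(1-e^{-4R})) + R for R ≤ R*, and equals snr/4 - (snr²/8)/(1+√(1+snr²/4)) + (1/2)ln((1+√(1+snr²/4))/2) - R for R ≥ R*, where R* = (1/4)ln((1+√(1+snr²/4))/2). -/
/-!
The objective `f ρ = a (1 - ρ) - ½ log (1 - ρ²)` with `a = snr / 4` is convex on `(-1, 1)`, and
`log y ≤ y - 1` gives its tangent-line bound `f ρ ≥ f x + (x - ρ) (a - x / (1 - x²))`. Its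
unconstrained minimiser `c = snr / (2 (1 + √(1 + snr²/4)))` solves `a (1 - c²) = c`. The
constraint radius `r = √(1 - e^{-4R})` increases with `R` and equals `c` exactly at `R = R*`.
Hence for `R ≤ R*` the minimum over `|ρ| ≤ r` sits on the boundary `ρ = r`, where
`-½ log (1 - r²) = 2R`, and for `R ≥ R*` it sits at the interior point `ρ = c`.
-/

open Real

lemma log_one_sub_sq_sub_log_mul_le {x ρ : ℝ} (hx : 0 < 1 - x ^ 2) (hρ : 0 < 1 - ρ ^ 2) :
    (log (1 - ρ ^ 2) - log (1 - x ^ 2)) * (1 - x ^ 2) ≤ 2 * x * (x - ρ) := by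
  have h := log_le_sub_one_of_pos (div_pos hρ hx)
  rw [log_div hρ.ne' hx.ne', div_sub_one hx.ne', le_div_iff₀ hx] at h
  nlinarith [sq_nonneg (x - ρ)]

lemma objective_le_of_slope {a x ρ : ℝ} (hx : 0 < 1 - x ^ 2) (hρ : 0 < 1 - ρ ^ 2)
    (hslope : 0 ≤ (x - ρ) * (a * (1 - x ^ 2) - x)) :
    a * (1 - x) - 1 / 2 * log (1 - x ^ 2) ≤ a * (1 - ρ) - 1 / 2 * log (1 - ρ ^ 2) := by
  have hlog := log_one_sub_sq_sub_log_mul_le hx hρ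
  have h : (log (1 - ρ ^ 2) - log (1 - x ^ 2)) * (1 - x ^ 2) ≤ 2 * a * (x - ρ) * (1 - x ^ 2) := by
    nlinarith
  nlinarith [le_of_mul_le_mul_right h hx]

lemma sInf_objective_eq_of_slope {a r R x : ℝ} (hr : r < 1) (hxr : |x| ≤ r)
    (hslope : ∀ ρ, |ρ| ≤ r → 0 ≤ (x - ρ) * (a * (1 - x ^ 2) - x)) :
    sInf {v : ℝ | ∃ ρ : ℝ, |ρ| ≤ r ∧ v = a * (1 - ρ) - 1 / 2 * log (1 - ρ ^ 2) - R}
      = a * (1 - x) - 1 / 2 * log (1 - x ^ 2) - R := by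
  have one_sub_sq_pos : ∀ ρ, |ρ| ≤ r → 0 < 1 - ρ ^ 2 := fun ρ hρ ↦ by
    nlinarith [sq_abs ρ, abs_nonneg ρ]
  refine IsLeast.csInf_eq ⟨⟨x, hxr, rfl⟩, ?_⟩
  rintro v ⟨ρ, hρ, rfl⟩
  linarith [objective_le_of_slope (one_sub_sq_pos x hxr) (one_sub_sq_pos ρ hρ) (hslope ρ hρ)]

lemma monotone_sqrt_one_sub_exp : Monotone fun R : ℝ ↦ √(1 - exp (-4 * R)) :=
  fun _ _ h ↦ sqrt_le_sqrt (sub_le_sub_left (exp_le_exp.mpr (by linarith)) 1)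

noncomputable def awgnCorr (snr : ℝ) : ℝ := snr / (2 * (1 + √(1 + snr ^ 2 / 4)))

section awgnCorr

variable {snr : ℝ}

lemma one_sub_awgnCorr_sq : 1 - awgnCorr snr ^ 2 = 2 / (1 + √(1 + snr ^ 2 / 4)) := by
  have hs : √(1 + snr ^ 2 / 4) ^ 2 = 1 + snr ^ 2 / 4 := sq_sqrt (by positivity)
  have hs0 := sqrt_nonneg (1 + snr ^ 2 / 4)
  rw [awgnCorr]
  generalize √(1 + snr ^ 2 / 4) = s at hs hs0 ⊢
  field_simp
  nlinarith

lemma awgnCorr_stationary : snr / 4 * (1 - awgnCorr snr ^ 2) = awgnCorr snr := by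
  have hs0 := sqrt_nonneg (1 + snr ^ 2 / 4)
  rw [one_sub_awgnCorr_sq, awgnCorr]
  field_simp
  ring

lemma log_one_sub_awgnCorr_sq :
    log (1 - awgnCorr snr ^ 2) = -log ((1 + √(1 + snr ^ 2 / 4)) / 2) := by
  rw [one_sub_awgnCorr_sq, ← log_inv, inv_div]

lemma awgnCorr_nonneg (hsnr : 0 ≤ snr) : 0 ≤ awgnCorr snr := by
  unfold awgnCorr; positivity

lemma sqrt_one_sub_exp_rateStar (hsnr : 0 ≤ snr) :
    √(1 - exp (-4 * (1 / 4 * log ((1 + √(1 + snr ^ 2 / 4)) / 2)))) = awgnCorr snr := by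
  rw [show -4 * (1 / 4 * log ((1 + √(1 + snr ^ 2 / 4)) / 2))
      = log (1 - awgnCorr snr ^ 2) by rw [log_one_sub_awgnCorr_sq]; ring,
    exp_log (by rw [one_sub_awgnCorr_sq]; positivity), sub_sub_cancel,
    sqrt_sq (awgnCorr_nonneg hsnr)]

end awgnCorr

/-- the AWGN TRC lower bound E⁻(R) equals the two-piece formula
around R* = (1/4)ln((1+√(1+snr²/4))/2). -/
theorem stmt_7 (snr R : ℝ) (hs : 0 < snr) (hR : 0 ≤ R) :
    (R ≤ (1/4) * Real.log ((1 + Real.sqrt (1 + snr^2/4))/2) →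
      sInf {v : ℝ | ∃ ρ : ℝ, |ρ| ≤ Real.sqrt (1 - Real.exp (-4*R)) ∧
          v = (snr/4)*(1 - ρ) - (1/2) * Real.log (1 - ρ^2) - R}
        = (snr/4) * (1 - Real.sqrt (1 - Real.exp (-4*R))) + R) ∧
    ((1/4) * Real.log ((1 + Real.sqrt (1 + snr^2/4))/2) ≤ R →
      sInf {v : ℝ | ∃ ρ : ℝ, |ρ| ≤ Real.sqrt (1 - Real.exp (-4*R)) ∧
          v = (snr/4)*(1 - ρ) - (1/2) * Real.log (1 - ρ^2) - R}
        = snr/4 - (snr^2/8) / (1 + Real.sqrt (1 + snr^2/4))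
            + (1/2) * Real.log ((1 + Real.sqrt (1 + snr^2/4))/2) - R) := by
  have hcorr : √(1 - exp (-4 * (1 / 4 * log ((1 + √(1 + snr ^ 2 / 4)) / 2)))) = awgnCorr snr :=
    sqrt_one_sub_exp_rateStar hs.le
  set c := awgnCorr snr
  set r := √(1 - exp (-4 * R))
  have hc0 : 0 ≤ c := awgnCorr_nonneg hs.le
  have hstat : snr / 4 * (1 - c ^ 2) = c := awgnCorr_stationary
  have hr0 : 0 ≤ r := sqrt_nonneg _
  have hr2 : 1 - r ^ 2 = exp (-4 * R) := by
    rw [sq_sqrt (by linarith [exp_le_one_iff.mpr (by linarith : -4 * R ≤ 0)])]; ring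
  have hr1 : r < 1 := by nlinarith [exp_pos (-4 * R)]
  constructor
  · intro hle
    have hrc : r ≤ c := hcorr ▸ monotone_sqrt_one_sub_exp hle
    rw [sInf_objective_eq_of_slope hr1 (abs_of_nonneg hr0).le fun ρ hρ ↦ ?_, hr2, log_exp]
    · ring
    have hsq : r ^ 2 ≤ c ^ 2 := pow_le_pow_left₀ hr0 hrc 2
    have hslope : 0 ≤ snr / 4 * (1 - r ^ 2) - r := by
      nlinarith [mul_le_mul_of_nonneg_left hsq hs.le]
    exact mul_nonneg (by linarith [le_abs_self ρ]) hslope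
  · intro hge
    have hcr : c ≤ r := hcorr ▸ monotone_sqrt_one_sub_exp hge
    rw [sInf_objective_eq_of_slope hr1 ((abs_of_nonneg hc0).trans_le hcr) fun ρ _ ↦ by
      rw [hstat, sub_self, mul_zero], log_one_sub_awgnCorr_sq]
    unfold c awgnCorr
    have hs0 := sqrt_nonneg (1 + snr ^ 2 / 4)
    field_simp
    ring
end

section
/- The function E⁻(R) defined piecewise as (snr/4)(1-√(1-e^{-4R})) + R for 0 ≤ R ≤ R* and as the affine function snr/4 - (snr²/8)/(1+√(1+snr²/4)) + (1/2)ln((1+√(1+snr²/4))/2) - R for R ≥ R*, with R* = (1/4)ln((1+√(1+snr²/4))/2), is continuous and continuously differentiable at R = R*, with derivative -1 there. -/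
/-! With `s = √(1 + snr²/4)` the break point satisfies `e^{-4R*} = 2/(1+s)`, hence
`1 - e^{-4R*} = (s-1)/(s+1) = (snr/(2(1+s)))²`. From this closed form of `√(1 - e^{-4R*})`
the two pieces take the same value at `R*`, and the slope `1 - (snr/2) e^{-4R}/√(1 - e^{-4R})`
of the curvy piece equals `-1` there, the slope of the straight line. A function glued from two
pieces that agree to first order at the break point is differentiable there. -/

open Real Set

theorem HasDerivAt.ite_le {F : Type*} [NormedAddCommGroup F] [NormedSpace ℝ F]
    {f g : ℝ → F} {f' : F} {a : ℝ} (hf : HasDerivAt f f' a) (hg : HasDerivAt g f' a)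
    (hfg : f a = g a) : HasDerivAt (fun x => if x ≤ a then f x else g x) f' a := by
  have hleft : HasDerivWithinAt (fun x => if x ≤ a then f x else g x) f' (Iic a) a :=
    hf.hasDerivWithinAt.congr (fun x hx => if_pos hx) (if_pos le_rfl)
  have hright : HasDerivWithinAt (fun x => if x ≤ a then f x else g x) f' (Ici a) a := by
    refine hg.hasDerivWithinAt.congr (fun x hx => ?_) (by simp [hfg])
    rcases (mem_Ici.mp hx).eq_or_lt with rfl | hlt
    · simp [hfg]
    · exact if_neg (not_le.mpr hlt)
  simpa [Iic_union_Ici] using hleft.union hright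

/-- For `R < 0` the square root vanishes near `R` and the formula still gives the slope `1`,
since `√` of a negative number and division by `0` are both `0`. -/
theorem hasDerivAt_curvy_exponent (snr : ℝ) {R : ℝ} (hR : R ≠ 0) :
    HasDerivAt (fun R : ℝ => (snr/4) * (1 - √(1 - exp (-4*R))) + R)
      (1 - snr / 2 * exp (-4*R) / √(1 - exp (-4*R))) R := by
  have hpos : 1 - exp (-4*R) ≠ 0 := by
    rw [sub_ne_zero, ne_comm, Ne, exp_eq_one_iff]
    simpa using hR
  have hinner : HasDerivAt (fun R : ℝ => 1 - exp (-4*R)) (-(exp (-4*R) * (-4*1))) R :=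
    (((hasDerivAt_id R).const_mul (-4)).exp).const_sub 1
  refine (((hinner.sqrt hpos).const_sub 1).const_mul (snr/4)).add (hasDerivAt_id R)
    |>.congr_deriv ?_
  ring

/-- The break point `R*` of `E⁻`. -/
noncomputable def criticalRate (snr : ℝ) : ℝ := (1/4) * log ((1 + √(1 + snr^2/4)) / 2)

theorem one_lt_sqrt_one_add_sq_div_four {snr : ℝ} (hs : snr ≠ 0) : 1 < √(1 + snr^2/4) := by
  rw [lt_sqrt zero_le_one]
  have := sq_pos_of_ne_zero hs
  linarith

theorem criticalRate_pos {snr : ℝ} (hs : snr ≠ 0) : 0 < criticalRate snr := by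
  have := one_lt_sqrt_one_add_sq_div_four hs
  unfold criticalRate
  exact mul_pos (by norm_num) (log_pos (by linarith))

theorem exp_neg_four_mul_criticalRate (snr : ℝ) :
    exp (-4 * criticalRate snr) = 2 / (1 + √(1 + snr^2/4)) := by
  have hpos : 0 < (1 + √(1 + snr^2/4)) / 2 := by positivity
  rw [criticalRate, show ∀ x : ℝ, -4 * ((1/4) * x) = -x by intro x; ring, exp_neg,
    exp_log hpos, inv_div]

theorem sqrt_one_sub_exp_neg_four_mul_criticalRate {snr : ℝ} (hs : 0 ≤ snr) :
    √(1 - exp (-4 * criticalRate snr)) = snr / (2 * (1 + √(1 + snr^2/4))) := by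
  rw [exp_neg_four_mul_criticalRate]
  set s := √(1 + snr^2/4)
  have hs2 : s^2 = 1 + snr^2/4 := sq_sqrt (by positivity)
  have hs1 : 0 < 1 + s := by positivity
  have hsq : 1 - 2 / (1 + s) = (snr / (2 * (1 + s)))^2 := by
    field_simp
    nlinarith
  rw [hsq, sqrt_sq (by positivity)]

/-- the piecewise E⁻(R) is continuous and differentiable at R*,
with derivative -1; moreover the curvy piece itself has derivative -1 at R*. -/
theorem stmt_8 (snr : ℝ) (hs : 0 < snr) :
    ContinuousAt
      (fun R : ℝ =>
        if R ≤ (1/4) * Real.log ((1 + Real.sqrt (1 + snr^2/4))/2) then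
          (snr/4) * (1 - Real.sqrt (1 - Real.exp (-4*R))) + R
        else
          snr/4 - (snr^2/8) / (1 + Real.sqrt (1 + snr^2/4))
            + (1/2) * Real.log ((1 + Real.sqrt (1 + snr^2/4))/2) - R)
      ((1/4) * Real.log ((1 + Real.sqrt (1 + snr^2/4))/2)) ∧
    HasDerivAt
      (fun R : ℝ =>
        if R ≤ (1/4) * Real.log ((1 + Real.sqrt (1 + snr^2/4))/2) then
          (snr/4) * (1 - Real.sqrt (1 - Real.exp (-4*R))) + R
        else
          snr/4 - (snr^2/8) / (1 + Real.sqrt (1 + snr^2/4))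
            + (1/2) * Real.log ((1 + Real.sqrt (1 + snr^2/4))/2) - R)
      (-1) ((1/4) * Real.log ((1 + Real.sqrt (1 + snr^2/4))/2)) ∧
    HasDerivAt
      (fun R : ℝ => (snr/4) * (1 - Real.sqrt (1 - Real.exp (-4*R))) + R)
      (-1) ((1/4) * Real.log ((1 + Real.sqrt (1 + snr^2/4))/2)) := by
  have hcurvy : HasDerivAt (fun R : ℝ => (snr/4) * (1 - √(1 - exp (-4*R))) + R) (-1)
      (criticalRate snr) := by
    refine (hasDerivAt_curvy_exponent snr (criticalRate_pos hs.ne').ne').congr_deriv ?_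
    rw [sqrt_one_sub_exp_neg_four_mul_criticalRate hs.le, exp_neg_four_mul_criticalRate]
    field_simp
    ring
  have hline := (hasDerivAt_id' (criticalRate snr)).const_sub
    (snr/4 - (snr^2/8) / (1 + √(1 + snr^2/4)) + (1/2) * log ((1 + √(1 + snr^2/4))/2))
  have hglue := hcurvy.ite_le hline <| by
    rw [sqrt_one_sub_exp_neg_four_mul_criticalRate hs.le, criticalRate]
    field_simp
    ring
  exact ⟨hglue.continuousAt, hglue, hcurvy⟩
end
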